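/- arXiv:1607.00031 — 9 statements merged into one kernel-verified Lean document; each statement's English description precedes it below -/
import Mathlib

section
/- For every set H ⊆ G with the Baire property with respect to T, the set H ∖ int_{D_B(T)}(H) is T-meagre, where int_{D_B(T)}(H) is the interior of H in the topology D_B(T). Moreover, if S has the Baire property and is T-non-meagre, then S has non-empty D_B(T)-interior; in fact S has non-empty D_B(T)-interior inside every T-open set on which S is T-dense and T-non-meagre. -/
open Set Topology TopologicalSpace

/-- `H` is `T`-locally comeagre at each of its points. -/
def DBOpen {G : Type*} [TopologicalSpace G] (H : Set G) : Prop :=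
  ∀ x ∈ H, ∃ U : Set G, IsOpen U ∧ x ∈ U ∧ IsMeagre (U \ H)

/-!
If `H` differs from an open set `U` by a meagre set, then `U` itself witnesses that `H ∩ U` is
locally comeagre at each of its points, and `H \ (H ∩ U) = H \ U` is meagre. So a Baire set is a
`D_B`-open set up to a meagre set, and therefore meets its `D_B`-interior wherever it is non-meagre.
-/

section

variable {G : Type*} [TopologicalSpace G]

theorem dbOpen_inter_of_isMeagre_symmDiff {H U : Set G} (hU : IsOpen U)
    (hHU : IsMeagre (symmDiff H U)) : DBOpen (H ∩ U) :=
  fun _ hx => ⟨U, hU, hx.2, hHU.mono fun _ hy => Or.inr ⟨hy.1, fun hyH => hy.2 ⟨hyH, hy.1⟩⟩⟩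

theorem exists_dbOpen_subset_isMeagre_diff {H U : Set G} (hU : IsOpen U)
    (hHU : IsMeagre (symmDiff H U)) : ∃ O ⊆ H, DBOpen O ∧ IsMeagre (H \ O) :=
  ⟨H ∩ U, inter_subset_left, dbOpen_inter_of_isMeagre_symmDiff hU hHU,
    hHU.mono fun _ hx => Or.inl ⟨hx.1, fun hxU => hx.2 ⟨hx.1, hxU⟩⟩⟩

theorem inter_nonempty_of_isMeagre_diff {S T A : Set G} (hST : IsMeagre (S \ T))
    (hSA : ¬ IsMeagre (S ∩ A)) : (A ∩ T).Nonempty := by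
  by_contra hAT
  refine hSA (hST.mono ?_)
  rintro x ⟨hxS, hxA⟩
  exact ⟨hxS, fun hxT => hAT ⟨x, hxA, hxT⟩⟩

end

theorem stmt_2_general {G : Type*}
    (τ : TopologicalSpace G)
    (hτ : ∀ S : Set G, IsOpen[τ] S ↔ DBOpen S) :
    (∀ H : Set G, (∃ U : Set G, IsOpen U ∧ IsMeagre (symmDiff H U)) →
      IsMeagre (H \ @interior G τ H)) ∧
    (∀ S : Set G, (∃ U : Set G, IsOpen U ∧ IsMeagre (symmDiff S U)) →
      ¬ IsMeagre S → (@interior G τ S).Nonempty) ∧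
    (∀ S : Set G, (∃ U : Set G, IsOpen U ∧ IsMeagre (symmDiff S U)) →
      ∀ V : Set G, IsOpen V → V.Nonempty → V ⊆ closure S → ¬ IsMeagre (S ∩ V) →
        (V ∩ @interior G τ S).Nonempty) := by
  have residue_meagre : ∀ H : Set G, (∃ U : Set G, IsOpen U ∧ IsMeagre (symmDiff H U)) →
      IsMeagre (H \ interior H) := by
    rintro H ⟨U, hU, hHU⟩
    obtain ⟨O, hOH, hO, hHO⟩ := exists_dbOpen_subset_isMeagre_diff hU hHU
    exact hHO.mono (sdiff_subset_sdiff_right (interior_maximal hOH ((hτ O).2 hO)))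
  refine ⟨residue_meagre, fun S hS hSm => ?_, fun S hS V _ _ _ hSV => ?_⟩
  · simpa using inter_nonempty_of_isMeagre_diff (A := univ) (residue_meagre S hS)
      (by rwa [inter_univ])
  · exact inter_nonempty_of_isMeagre_diff (residue_meagre S hS) hSV

/-- For a `T`-Baire set `H`, the set `H \ int_{D_B(T)}(H)` is `T`-meagre; a
`T`-Baire `T`-non-meagre set has non-empty `D_B(T)`-interior, indeed inside
every `T`-open set on which it is `T`-dense and `T`-non-meagre. -/
theorem stmt_2 {G : Type*} [Group G] [MetricSpace G] [IsTopologicalGroup G]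
    [SeparableSpace G]
    (hd : ∀ x y z : G, dist (x * z) (y * z) = dist x y)
    (τ : TopologicalSpace G)
    (hτ : ∀ S : Set G, IsOpen[τ] S ↔ DBOpen S) :
    (∀ H : Set G, (∃ U : Set G, IsOpen U ∧ IsMeagre (symmDiff H U)) →
      IsMeagre (H \ @interior G τ H)) ∧
    (∀ S : Set G, (∃ U : Set G, IsOpen U ∧ IsMeagre (symmDiff S U)) →
      ¬ IsMeagre S → (@interior G τ S).Nonempty) ∧
    (∀ S : Set G, (∃ U : Set G, IsOpen U ∧ IsMeagre (symmDiff S U)) →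
      ∀ V : Set G, IsOpen V → V.Nonempty → V ⊆ closure S → ¬ IsMeagre (S ∩ V) →
        (V ∩ @interior G τ S).Nonempty) :=
  stmt_2_general τ hτ
end

section
/- Let τ be a topology on a set X with a countable basis 𝓑 and let I be a σ-ideal of subsets of X. Then the family H := {V ∖ M : V ∈ τ, M ∈ I} is itself a topology on X (so the topology generated by H is H itself); in particular, every W ∈ H can be written as W = (⋃_{B ∈ 𝓑_W} B) ∖ M for some M ∈ I, where 𝓑_W := {B ∈ 𝓑 : B ∖ L ⊆ W for some L ∈ I}. -/
/-!
Each `W ∈ 𝓗` is covered by the basic sets `B` with `B \ L ⊆ W` for some `L ∈ I`: a point of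
`V \ M ⊆ W` lies in a basic `B ⊆ V`, and `B \ M ⊆ W`. Conversely the excess of this cover over `W`
lies in the union of the countably many witnesses `L`, which is in `I`. Hence `W = U \ M` with `U`
open and `M ∈ I`, and the same argument applied to an arbitrary union of members of `𝓗` shows
that `𝓗` is closed under unions, i.e. is a topology.
-/

open Set Topology TopologicalSpace

structure IsSigmaIdeal {X : Type*} (I : Set (Set X)) : Prop where
  empty_mem : ∅ ∈ I
  mono : ∀ s t : Set X, s ⊆ t → t ∈ I → s ∈ I
  iUnion_mem : ∀ f : ℕ → Set X, (∀ n, f n ∈ I) → (⋃ n, f n) ∈ I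

namespace IsSigmaIdeal

variable {X : Type*} {I : Set (Set X)}

theorem iUnion_mem_of_countable (hI : IsSigmaIdeal I) {ι : Sort*} [Countable ι]
    (f : ι → Set X) (hf : ∀ i, f i ∈ I) : (⋃ i, f i) ∈ I := by
  cases isEmpty_or_nonempty ι with
  | inl _ => simpa only [iUnion_of_empty] using hI.empty_mem
  | inr _ =>
    obtain ⟨g, hg⟩ := exists_surjective_nat ι
    rw [← hg.iUnion_comp]
    exact hI.iUnion_mem _ fun n => hf (g n)

theorem union_mem (hI : IsSigmaIdeal I) {s t : Set X} (hs : s ∈ I) (ht : t ∈ I) :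
    s ∪ t ∈ I := by
  rw [union_eq_iUnion]
  exact hI.iUnion_mem_of_countable _ fun b => by cases b <;> assumption

end IsSigmaIdeal

section BasisCover

variable {X : Type*} {𝓑 I : Set (Set X)}

/-- The set `⋃ 𝓑_W`. -/
def basisCover (𝓑 I : Set (Set X)) (W : Set X) : Set X :=
  ⋃₀ {B ∈ 𝓑 | ∃ L ∈ I, B \ L ⊆ W}

theorem basisCover_diff_mem (hcount : 𝓑.Countable) (hI : IsSigmaIdeal I) (W : Set X) :
    basisCover 𝓑 I W \ W ∈ I := by
  have : Countable {B ∈ 𝓑 | ∃ L ∈ I, B \ L ⊆ W} := (hcount.mono (sep_subset _ _)).to_subtype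
  choose L hLI hLW using fun B : {B ∈ 𝓑 | ∃ L ∈ I, B \ L ⊆ W} => B.2.2
  refine hI.mono _ _ ?_ (hI.iUnion_mem_of_countable L hLI)
  rintro x ⟨⟨B, hB, hxB⟩, hxW⟩
  refine mem_iUnion.2 ⟨⟨B, hB⟩, ?_⟩
  by_contra hxL
  exact hxW (hLW ⟨B, hB⟩ ⟨hxB, hxL⟩)

theorem isOpen_basisCover [TopologicalSpace X] (hbasis : IsTopologicalBasis 𝓑) (W : Set X) :
    IsOpen (basisCover 𝓑 I W) :=
  isOpen_sUnion fun _ hB => hbasis.isOpen hB.1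

theorem subset_basisCover [TopologicalSpace X] (hbasis : IsTopologicalBasis 𝓑) {W : Set X}
    (hW : ∀ x ∈ W, ∃ V M, IsOpen V ∧ M ∈ I ∧ x ∈ V \ M ∧ V \ M ⊆ W) :
    W ⊆ basisCover 𝓑 I W := by
  intro x hx
  obtain ⟨V, M, hV, hM, hxVM, hVMW⟩ := hW x hx
  obtain ⟨B, hB, hxB, hBV⟩ := hbasis.exists_subset_of_mem_open hxVM.1 hV
  exact ⟨B, ⟨hB, M, hM, (sdiff_subset_sdiff_left hBV).trans hVMW⟩, hxB⟩

theorem exists_eq_basisCover_diff [TopologicalSpace X] (hbasis : IsTopologicalBasis 𝓑)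
    (hcount : 𝓑.Countable) (hI : IsSigmaIdeal I) {W : Set X}
    (hW : ∀ x ∈ W, ∃ V M, IsOpen V ∧ M ∈ I ∧ x ∈ V \ M ∧ V \ M ⊆ W) :
    ∃ M ∈ I, W = basisCover 𝓑 I W \ M :=
  ⟨_, basisCover_diff_mem hcount hI W,
    (sdiff_sdiff_cancel_left (subset_basisCover hbasis hW)).symm⟩

@[reducible] def diffIdealTopology [TopologicalSpace X] (hbasis : IsTopologicalBasis 𝓑)
    (hcount : 𝓑.Countable) (hI : IsSigmaIdeal I) : TopologicalSpace X where
  IsOpen S := ∃ V M, IsOpen V ∧ M ∈ I ∧ S = V \ M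
  isOpen_univ := ⟨univ, ∅, isOpen_univ, hI.empty_mem, sdiff_empty.symm⟩
  isOpen_inter := by
    rintro _ _ ⟨V₁, M₁, hV₁, hM₁, rfl⟩ ⟨V₂, M₂, hV₂, hM₂, rfl⟩
    refine ⟨V₁ ∩ V₂, M₁ ∪ M₂, hV₁.inter hV₂, hI.union_mem hM₁ hM₂, ?_⟩
    ext
    simp only [mem_inter_iff, mem_sdiff, mem_union]
    tauto
  isOpen_sUnion 𝒮 h𝒮 := by
    obtain ⟨M, hM, hW⟩ := exists_eq_basisCover_diff hbasis hcount hI (W := ⋃₀ 𝒮) <| by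
      rintro x ⟨s, hs, hxs⟩
      obtain ⟨V, M, hV, hM, rfl⟩ := h𝒮 s hs
      exact ⟨V, M, hV, hM, hxs, subset_sUnion_of_mem hs⟩
    exact ⟨_, M, isOpen_basisCover hbasis _, hM, hW⟩

end BasisCover

/-- Hashimoto's theorem: for a topology with countable basis `𝓑` and a
`σ`-ideal `I`, the family `𝓗 = {V \ M : V open, M ∈ I}` is itself the
topology it generates, and every `W ∈ 𝓗` has the representation
`W = (⋃ 𝓑_W) \ M` for some `M ∈ I`, where
`𝓑_W = {B ∈ 𝓑 : B \ L ⊆ W for some L ∈ I}`. -/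
theorem stmt_7 {X : Type*} [TopologicalSpace X]
    (𝓑 : Set (Set X)) (hbasis : IsTopologicalBasis 𝓑) (hcount : 𝓑.Countable)
    (I : Set (Set X)) (hempty : ∅ ∈ I)
    (hmono : ∀ s t : Set X, s ⊆ t → t ∈ I → s ∈ I)
    (hunion : ∀ f : ℕ → Set X, (∀ n, f n ∈ I) → (⋃ n, f n) ∈ I) :
    (∀ S : Set X,
      IsOpen[TopologicalSpace.generateFrom
          {W : Set X | ∃ V M : Set X, IsOpen V ∧ M ∈ I ∧ W = V \ M}] S ↔
        ∃ V M : Set X, IsOpen V ∧ M ∈ I ∧ S = V \ M) ∧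
    (∀ W : Set X, (∃ V M : Set X, IsOpen V ∧ M ∈ I ∧ W = V \ M) →
      ∃ M ∈ I, W = (⋃₀ {B ∈ 𝓑 | ∃ L ∈ I, B \ L ⊆ W}) \ M) := by
  have hI : IsSigmaIdeal I := ⟨hempty, hmono, hunion⟩
  refine ⟨fun S => ?_, fun W hW => ?_⟩
  · exact Iff.of_eq <| congrArg (IsOpen[·] S) <|
      generateFrom_setOfPred_isOpen (diffIdealTopology hbasis hcount hI)
  · obtain ⟨V, M, hV, hM, rfl⟩ := hW
    exact exists_eq_basisCover_diff hbasis hcount hI fun x hx => ⟨V, M, hV, hM, hx, subset_rfl⟩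
end

section
/- Let τ be a topology on a set X with a countable basis and let I be the σ-ideal of τ-meagre subsets of X. If τ is a Baire topology (X is a Baire space under τ), then the topology H := {V ∖ M : V ∈ τ, M ∈ I} is also a Baire topology. -/
open Set Topology TopologicalSpace

/-- If `τ` is a Baire topology with a countable basis and `I` is the
`σ`-ideal of `τ`-meagre sets, then the Hashimoto topology
`𝓗 = {V \ M : V open, M meagre}` is also a Baire topology. -/
theorem stmt_9 {X : Type*} (τ' : TopologicalSpace X) [TopologicalSpace X]
    (𝓑 : Set (Set X)) (hbasis : IsTopologicalBasis 𝓑) (hcount : 𝓑.Countable)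
    [BaireSpace X]
    (hτ' : ∀ S : Set X, IsOpen[τ'] S ↔ ∃ V M : Set X, IsOpen V ∧ IsMeagre M ∧ S = V \ M) :
    @BaireSpace X τ' := by
  refine @BaireSpace.mk X τ' ?_
  intro f hopen hdense
  choose V M hV hM hf using fun n => (hτ' (f n)).1 (hopen n)
  have hVd : ∀ n, Dense (V n) := by
    intro n
    rw [dense_iff_inter_open]
    intro U hU hUne
    have hU' : IsOpen[τ'] U := (hτ' U).2 ⟨U, ∅, hU, by unfold IsMeagre; simp, by simp⟩
    obtain ⟨x, hxU, hxf⟩ := (@dense_iff_inter_open X τ' _).1 (hdense n) U hU' hUne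
    rw [hf n] at hxf
    exact ⟨x, hxU, hxf.1⟩
  have hcm : ∀ n, IsMeagre (V n)ᶜ := fun n => by
    rw [isMeagre_iff_countable_union_isNowhereDense]
    refine ⟨{(V n)ᶜ}, ?_, countable_singleton _, by simp⟩
    rintro t rfl
    rw [(isClosed_compl_iff.2 (hV n)).isNowhereDense_iff, interior_compl,
      (hVd n).closure_eq, compl_univ]
  rw [@dense_iff_inter_open X τ']
  intro W hW hWne
  obtain ⟨V0, M0, hV0, hM0, rfl⟩ := (hτ' W).1 hW
  have hU : IsMeagre (⋃ n, (M n ∪ (V n)ᶜ)) := isMeagre_iUnion fun n => by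
    have h1 := hM n
    have h2 := hcm n
    unfold IsMeagre at *
    rw [compl_union]
    exact Filter.inter_mem h1 h2
  have hS : IsMeagre (M0 ∪ ⋃ n, (M n ∪ (V n)ᶜ)) := by
    unfold IsMeagre at *
    rw [compl_union]
    exact Filter.inter_mem hM0 hU
  have hV0ne : V0.Nonempty := hWne.mono diff_subset
  have hns : ¬ V0 ⊆ M0 ∪ ⋃ n, (M n ∪ (V n)ᶜ) :=
    fun h => not_isMeagre_of_isOpen hV0 hV0ne (hS.mono h)
  rw [not_subset] at hns
  obtain ⟨x, hxV, hxS⟩ := hns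
  simp only [mem_union, mem_iUnion, mem_compl_iff, not_or, not_exists, not_not] at hxS
  refine ⟨x, ⟨hxV, hxS.1⟩, mem_iInter.2 fun n => ?_⟩
  rw [hf n]
  exact ⟨(hxS.2 n).2, (hxS.2 n).1⟩
end

section
/- Let μ be a Borel probability measure on G that is inner regular by compact sets and outer regular by open sets, and let K ⊆ G be compact with μ(K) > 0. If μ_-(K) > 0, then there exists δ > 0 such that μ(tK ∩ K) > 0 for all t with ‖t‖ < δ; in particular B_δ ⊆ KK⁻¹, equivalently tK ∩ K ≠ ∅ whenever ‖t‖ < δ. -/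
open Set Topology TopologicalSpace MeasureTheory Filter Pointwise

/-! If every translate `tK` with `‖t‖ < δ₀` has measure at least `c > 0`, choose `ε > 0`
so that the `ε`-thickening of `K` has measure below `μ K + c`. Right invariance gives
`d(tx, x) = ‖t‖`, so for `‖t‖ < ε` both `tK` and `K` lie in that thickening, and then
`μ (tK ∪ K) < μ (tK) + μ K` forces `μ (tK ∩ K) > 0`. -/

theorem MeasureTheory.measure_inter_pos_of_measure_lt_add {α : Type*} [MeasurableSpace α]
    (μ : Measure α) {s t u : Set α} (ht : MeasurableSet t) (hsu : s ⊆ u) (htu : t ⊆ u)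
    (h : μ u < μ s + μ t) : 0 < μ (s ∩ t) := by
  refine pos_iff_ne_zero.2 fun h₀ => h.not_ge ?_
  calc μ s + μ t = μ (s ∪ t) + μ (s ∩ t) := (measure_union_add_inter s ht).symm
    _ = μ (s ∪ t) := by rw [h₀, add_zero]
    _ ≤ μ u := measure_mono (union_subset hsu htu)

theorem MeasureTheory.exists_measure_thickening_lt {α : Type*} [PseudoMetricSpace α]
    [MeasurableSpace α] [OpensMeasurableSpace α] (μ : Measure α) [IsFiniteMeasure μ]
    {s : Set α} (hs : IsClosed s) {a : ENNReal} (h : μ s < a) :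
    ∃ ε > 0, μ (Metric.thickening ε s) < a := by
  have hlim := tendsto_measure_thickening_of_isClosed ⟨1, one_pos, measure_ne_top μ _⟩ hs
  obtain ⟨ε, hεa, hε⟩ := ((hlim.eventually (gt_mem_nhds h)).and self_mem_nhdsWithin).exists
  exact ⟨ε, hε, hεa⟩

theorem mem_mul_inv_of_image_mul_left_inter_nonempty {G : Type*} [Group G] {t : G} {K : Set G}
    (h : ((t * ·) '' K ∩ K).Nonempty) : t ∈ K * K⁻¹ := by
  obtain ⟨_, ⟨x, hx, rfl⟩, htx⟩ := h
  simpa using Set.mul_mem_mul htx (Set.inv_mem_inv.2 hx)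

section RightInvariantMetric

variable {G : Type*} [Group G] [PseudoMetricSpace G]
  (hd : ∀ x y z : G, dist (x * z) (y * z) = dist x y)
include hd

theorem dist_mul_left_self_of_right_invariant (t x : G) : dist (t * x) x = dist 1 t := by
  simpa [dist_comm] using hd t 1 x

theorem image_mul_left_subset_thickening_of_right_invariant {t : G} {ε : ℝ} (ht : dist 1 t < ε)
    (K : Set G) : (t * ·) '' K ⊆ Metric.thickening ε K := by
  rintro _ ⟨x, hx, rfl⟩
  exact Metric.mem_thickening_iff.2
    ⟨x, hx, (dist_mul_left_self_of_right_invariant hd t x).trans_lt ht⟩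

theorem exists_pos_forall_measure_image_mul_left_inter_pos_of_right_invariant
    [MeasurableSpace G] [OpensMeasurableSpace G] (μ : Measure G) [IsFiniteMeasure μ]
    {K : Set G} (hK : IsClosed K)
    (hsub : 0 < ⨆ (δ : ℝ) (_ : 0 < δ), ⨅ (t : G) (_ : dist (1 : G) t < δ),
      μ ((t * ·) '' K)) :
    ∃ δ > (0 : ℝ), ∀ t : G, dist (1 : G) t < δ → 0 < μ ((t * ·) '' K ∩ K) := by
  obtain ⟨δ₀, hδ₀⟩ := lt_iSup_iff.1 hsub
  obtain ⟨hδ₀pos, hc⟩ := lt_iSup_iff.1 hδ₀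
  set c := ⨅ (t : G) (_ : dist (1 : G) t < δ₀), μ ((t * ·) '' K)
  obtain ⟨ε, hεpos, hε⟩ :=
    exists_measure_thickening_lt μ hK (ENNReal.lt_add_right (measure_ne_top μ K) hc.ne')
  refine ⟨min δ₀ ε, lt_min hδ₀pos hεpos, fun t ht => ?_⟩
  have hcK : c ≤ μ ((t * ·) '' K) := biInf_le _ (ht.trans_le (min_le_left _ _))
  refine measure_inter_pos_of_measure_lt_add μ hK.measurableSet
    (image_mul_left_subset_thickening_of_right_invariant hd (ht.trans_le (min_le_right _ _)) K)
    (Metric.self_subset_thickening hεpos K) ?_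
  calc μ (Metric.thickening ε K) < μ K + c := hε
    _ ≤ μ ((t * ·) '' K) + μ K := by rw [add_comm]; gcongr

end RightInvariantMetric

theorem stmt_11_general {G : Type*} [Group G] [MetricSpace G]
    [MeasurableSpace G] [BorelSpace G]
    (hd : ∀ x y z : G, dist (x * z) (y * z) = dist x y)
    (μ : Measure G) [IsProbabilityMeasure μ]
    (K : Set G) (hK : IsCompact K)
    (hsub : 0 < ⨆ (δ : ℝ) (_ : 0 < δ), ⨅ (t : G) (_ : dist (1 : G) t < δ),
      μ ((t * ·) '' K)) :
    ∃ δ > (0 : ℝ),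
      (∀ t : G, dist (1 : G) t < δ → 0 < μ ((t * ·) '' K ∩ K)) ∧
      (∀ t : G, dist (1 : G) t < δ → t ∈ K * K⁻¹) ∧
      (∀ t : G, dist (1 : G) t < δ → ((t * ·) '' K ∩ K).Nonempty) := by
  obtain ⟨δ, hδ, hpos⟩ := exists_pos_forall_measure_image_mul_left_inter_pos_of_right_invariant
    hd μ hK.isClosed hsub
  have hne : ∀ t : G, dist (1 : G) t < δ → ((t * ·) '' K ∩ K).Nonempty :=
    fun t ht => nonempty_of_measure_ne_zero (hpos t ht).ne'
  exact ⟨δ, hδ, hpos, fun t ht => mem_mul_inv_of_image_mul_left_inter_nonempty (hne t ht), hne⟩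

/-- For a regular Borel probability measure `μ` and compact `K` of positive
measure with `μ₋(K) > 0`, there is `δ > 0` with `μ(tK ∩ K) > 0` for `‖t‖ < δ`;
in particular `B_δ ⊆ KK⁻¹`, equivalently `tK ∩ K ≠ ∅` for `‖t‖ < δ`. -/
theorem stmt_11 {G : Type*} [Group G] [MetricSpace G] [IsTopologicalGroup G]
    [SeparableSpace G] [MeasurableSpace G] [BorelSpace G]
    (hd : ∀ x y z : G, dist (x * z) (y * z) = dist x y)
    (μ : Measure G) [IsProbabilityMeasure μ] [μ.InnerRegular] [μ.OuterRegular]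
    (K : Set G) (hK : IsCompact K) (hμK : 0 < μ K)
    (hsub : 0 < ⨆ (δ : ℝ) (_ : 0 < δ), ⨅ (t : G) (_ : dist (1 : G) t < δ),
      μ ((t * ·) '' K)) :
    ∃ δ > (0 : ℝ),
      (∀ t : G, dist (1 : G) t < δ → 0 < μ ((t * ·) '' K ∩ K)) ∧
      (∀ t : G, dist (1 : G) t < δ → t ∈ K * K⁻¹) ∧
      (∀ t : G, dist (1 : G) t < δ → ((t * ·) '' K ∩ K).Nonempty) :=
  stmt_11_general hd μ K hK hsub
end

section
/- Mospan property: let μ be a Borel probability measure on G, inner regular by compact sets and outer regular by open sets, and let K ⊆ G be compact with μ(K) > 0. (a) If 1_G is not an interior point of KK⁻¹, then μ_-(K) = 0; equivalently, there is a sequence t_n → 1_G with lim_n μ(t_nK) = 0. (b) Conversely, if G is in addition a Baire space and μ_-(K) = 0 < μ(K), then there is a sequence t_n → 1_G with lim_n μ(t_nK) = 0, and there exists C ⊆ K with μ(K ∖ C) = 0 such that 1_G is not an interior point of CC⁻¹. -/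
/-!
(a) If `1 ∉ interior (K * K⁻¹)`, there are `t` arbitrarily close to `1` with `t • K` disjoint
from `K`; by outer regularity `μ (t • K \ K) → 0` as `t → 1`, so `μ (t • K)` is small for these `t`.

(b) Once `0` is a cluster value of `t ↦ μ (t • K)` at `1`, we may assume `1 ∈ interior (K * K⁻¹)`
(otherwise `C = K`), so `G` is locally compact and carries a Haar measure `λ`. The part `ρ` of
`μ|_K` absolutely continuous w.r.t. `λ` satisfies `ρ (K \ t • K) → 0` as `t → 1`, while
`ρ (t • K) ≤ μ (t • K)` is frequently small; so `ρ = 0` and `μ|_K` lives on a `λ`-null `S ⊆ K`.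
By Fubini, `μ (S ∩ t⁻¹ S) = 0` for `λ`-a.e. `t`, hence along a sequence `tₙ → 1`, and
`C = S \ ⋃ₙ tₙ⁻¹ S` satisfies `tₙ • C ∩ C = ∅`, i.e. `tₙ ∉ C * C⁻¹`.
-/

open Set Topology TopologicalSpace MeasureTheory Filter Pointwise ENNReal

theorem iSup_iInf_dist_lt_eq_liminf {X α : Type*} [PseudoMetricSpace X] [CompleteLattice α]
    (f : X → α) (a : X) :
    ⨆ (δ : ℝ) (_ : 0 < δ), ⨅ (x : X) (_ : dist a x < δ), f x = liminf f (𝓝 a) := by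
  simp only [Metric.nhds_basis_ball.liminf_eq_iSup_iInf, Metric.mem_ball']

theorem ENNReal.liminf_eq_zero_iff_mapClusterPt {α : Type*} {F : Filter α} {f : α → ℝ≥0∞} :
    liminf f F = 0 ↔ MapClusterPt 0 F f := by
  rw [← nonpos_iff_eq_zero, liminf_le_iff, nhds_zero_basis.mapClusterPt_iff_frequently]
  rfl

theorem MeasureTheory.Measure.AbsolutelyContinuous.tendsto_measure_nhds_zero {α ι : Type*}
    [MeasurableSpace α] {μ ν : Measure α} [IsFiniteMeasure μ] [SigmaFinite ν] (hμν : μ ≪ ν)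
    {l : Filter ι} {s : ι → Set α} (hl : Tendsto (ν ∘ s) l (𝓝 0)) :
    Tendsto (μ ∘ s) l (𝓝 0) := by
  have hμ := Measure.withDensity_rnDeriv_eq μ ν hμν
  have hfin : ∫⁻ x, μ.rnDeriv ν x ∂ν ≠ ∞ := by
    rw [← setLIntegral_univ, ← withDensity_apply _ MeasurableSet.univ, hμ]
    exact measure_ne_top μ univ
  convert tendsto_setLIntegral_zero hfin hl using 2 with i
  rw [Function.comp_apply, ← withDensity_apply' _ (s i), hμ]

theorem disjoint_smul_set_self_iff {G : Type*} [Group G] {K : Set G} {t : G} :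
    Disjoint (t • K) K ↔ t ∉ K * K⁻¹ := by
  simp only [Set.disjoint_left, Set.mem_smul_set, smul_eq_mul, Set.mem_mul, Set.mem_inv]
  constructor
  · rintro h ⟨a, ha, b, hb, rfl⟩
    exact h ⟨b⁻¹, hb, by group⟩ ha
  · rintro h _ ⟨b, hb, rfl⟩ htb
    exact h ⟨t * b, htb, b⁻¹, by simpa using hb, by group⟩

section HaarNull

variable {G : Type*} [Group G] [MeasurableSpace G] [MeasurableMul₂ G] [MeasurableInv G]
  (ν μ : Measure G) [SFinite ν] [ν.IsMulLeftInvariant] [SFinite μ] {S : Set G}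

theorem ae_measure_inter_preimage_mul_left_eq_zero (hS : MeasurableSet S) (hνS : ν S = 0) :
    ∀ᵐ t ∂ν, μ (S ∩ (t * ·) ⁻¹' S) = 0 := by
  set E : Set (G × G) := {p | p.2 ∈ S ∧ p.1 * p.2 ∈ S}
  have hE : MeasurableSet E := (measurable_snd hS).inter ((measurable_fst.mul measurable_snd) hS)
  have hνμE : ν.prod μ E = 0 := by
    rw [Measure.prod_apply_symm hE]
    refine (lintegral_congr fun x => ?_).trans lintegral_zero
    exact measure_mono_null (fun t ht => ht.2) ((measure_mul_right_null ν x).2 hνS)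
  exact (Measure.measure_prod_null hE).mp hνμE

theorem exists_subset_measure_sdiff_eq_zero_one_notMem_interior [TopologicalSpace G]
    [FirstCountableTopology G] [ν.IsOpenPosMeasure] (hS : MeasurableSet S) (hνS : ν S = 0) :
    ∃ C ⊆ S, μ (S \ C) = 0 ∧ (1 : G) ∉ interior (C * C⁻¹) := by
  have hfreq : ∃ᶠ t in 𝓝 (1 : G), μ (S ∩ (t * ·) ⁻¹' S) = 0 :=
    mem_closure_iff_frequently.mp
      (Measure.dense_of_ae (ae_measure_inter_preimage_mul_left_eq_zero ν μ hS hνS) 1)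
  obtain ⟨t, ht1, htS⟩ := exists_seq_forall_of_frequently hfreq
  refine ⟨S \ ⋃ n, (t n * ·) ⁻¹' S, sdiff_subset, ?_, fun h1 => ?_⟩
  · rw [sdiff_sdiff_right_self, inter_iUnion]
    exact measure_iUnion_null htS
  · obtain ⟨n, hn⟩ := (ht1.eventually (mem_interior_iff_mem_nhds.mp h1)).exists
    refine disjoint_smul_set_self_iff.mp (Set.disjoint_left.mpr ?_) hn
    rintro _ ⟨x, hx, rfl⟩ htx
    exact hx.2 (mem_iUnion.2 ⟨n, htx.1⟩)

end HaarNull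

section Translates

variable {G : Type*} [Group G] [TopologicalSpace G] [IsTopologicalGroup G] [T2Space G]
  [MeasurableSpace G] [BorelSpace G] {K : Set G}

theorem tendsto_measure_smul_set_sdiff (μ : Measure G) [μ.OuterRegular] (hK : IsCompact K)
    (hμK : μ K ≠ ∞) : Tendsto (fun t : G => μ (t • K \ K)) (𝓝 1) (𝓝 0) := by
  refine ENNReal.tendsto_nhds_zero.2 fun ε hε => ?_
  obtain ⟨U, hKU, hU, -, hUK⟩ := hK.measurableSet.exists_isOpen_sdiff_lt hμK hε.ne'
  obtain ⟨V, hV, hVK⟩ := compact_open_separated_mul_left hK hU hKU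
  filter_upwards [hV] with t ht
  exact (measure_mono (sdiff_subset_sdiff_left ((smul_set_subset_mul ht).trans hVK))).trans hUK.le

theorem tendsto_measure_sdiff_smul_set (μ : Measure G) [μ.IsMulLeftInvariant] [μ.OuterRegular]
    (hK : IsCompact K) (hμK : μ K ≠ ∞) : Tendsto (fun t : G => μ (K \ t • K)) (𝓝 1) (𝓝 0) := by
  have hinv : Tendsto (fun t : G => t⁻¹) (𝓝 1) (𝓝 1) := by
    simpa using continuous_inv.tendsto (1 : G)
  refine ((tendsto_measure_smul_set_sdiff μ hK hμK).comp hinv).congr fun t => ?_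
  rw [Function.comp_apply, ← measure_smul μ t, smul_set_sdiff, smul_inv_smul]

theorem mapClusterPt_measure_smul_of_one_notMem_interior (μ : Measure G) [IsFiniteMeasure μ]
    [μ.OuterRegular] (hK : IsCompact K) (h : (1 : G) ∉ interior (K * K⁻¹)) :
    MapClusterPt 0 (𝓝 1) fun t : G => μ (t • K) := by
  have hdisj : ∃ᶠ t in 𝓝 (1 : G), Disjoint (t • K) K := by
    simpa [disjoint_smul_set_self_iff, Filter.Frequently, mem_interior_iff_mem_nhds] using h
  refine mapClusterPt_iff_frequently.2 fun s hs => (hdisj.and_eventually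
    ((tendsto_measure_smul_set_sdiff μ hK (measure_ne_top μ K)).eventually hs)).mono ?_
  rintro t ⟨hd, hts⟩
  rwa [hd.sdiff_eq_left] at hts

theorem restrict_mutuallySingular_of_mapClusterPt (ν : Measure G) [ν.IsMulLeftInvariant]
    [ν.OuterRegular] [SigmaFinite ν] (μ : Measure G) [IsFiniteMeasure μ] (hK : IsCompact K)
    (hνK : ν K ≠ ∞) (h : MapClusterPt 0 (𝓝 1) fun t : G => μ (t • K)) :
    μ.restrict K ⟂ₘ ν := by
  set ρ := ν.withDensity ((μ.restrict K).rnDeriv ν)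
  have hρμ : ρ ≤ μ.restrict K := Measure.withDensity_rnDeriv_le _ _
  have : IsFiniteMeasure ρ := isFiniteMeasure_of_le _ hρμ
  have hρ : Tendsto (fun t : G => ρ (K \ t • K)) (𝓝 1) (𝓝 0) :=
    (withDensity_absolutelyContinuous ν _).tendsto_measure_nhds_zero
      (tendsto_measure_sdiff_smul_set ν hK hνK)
  have hρK : ρ K = 0 := by
    refine nonpos_iff_eq_zero.mp (ENNReal.le_of_forall_pos_le_add fun ε hε _ => ?_)
    have hε2 : (0 : ℝ≥0∞) < ε / 2 := ENNReal.half_pos (by exact_mod_cast hε.ne')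
    obtain ⟨t, htμ, htρ⟩ := ((h.frequently (eventually_lt_nhds hε2)).and_eventually
      (hρ.eventually (eventually_lt_nhds hε2))).exists
    calc ρ K ≤ ρ (K ∩ t • K) + ρ (K \ t • K) := measure_le_inter_add_sdiff ρ K (t • K)
      _ ≤ μ (t • K) + ρ (K \ t • K) := add_le_add
          ((hρμ _).trans ((Measure.restrict_le_self _).trans (measure_mono inter_subset_right)))
          le_rfl
      _ ≤ 0 + ε := by
          rw [zero_add, ← ENNReal.add_halves (ε : ℝ≥0∞)]
          exact add_le_add htμ.le htρ.le
  have hρKc : ρ Kᶜ = 0 := nonpos_iff_eq_zero.mp <| (hρμ Kᶜ).trans_eq <| by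
    rw [Measure.restrict_apply hK.measurableSet.compl, compl_inter_self, measure_empty]
  refine (Measure.withDensity_rnDeriv_eq_zero _ _).mp (Measure.measure_univ_eq_zero.mp ?_)
  exact nonpos_iff_eq_zero.mp <| (measure_univ_le_add_compl K).trans_eq <| by
    rw [hρK, hρKc, add_zero]

theorem exists_subset_measure_sdiff_eq_zero_one_notMem_interior_of_mapClusterPt
    [SecondCountableTopology G] (μ : Measure G) [IsFiniteMeasure μ] (hK : IsCompact K)
    (h : MapClusterPt 0 (𝓝 1) fun t : G => μ (t • K)) :
    ∃ C ⊆ K, μ (K \ C) = 0 ∧ (1 : G) ∉ interior (C * C⁻¹) := by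
  by_cases h1 : (1 : G) ∈ interior (K * K⁻¹)
  swap
  · exact ⟨K, subset_rfl, by simp, h1⟩
  have : LocallyCompactSpace G := (hK.mul hK.inv).locallyCompactSpace_of_mem_nhds_of_group
    (mem_interior_iff_mem_nhds.mp h1)
  obtain ⟨T, hT, hμT, hT₀⟩ :=
    restrict_mutuallySingular_of_mapClusterPt Measure.haar μ hK hK.measure_lt_top.ne h
  obtain ⟨C, hCS, hμC, h1C⟩ := exists_subset_measure_sdiff_eq_zero_one_notMem_interior Measure.haar μ
    (hK.measurableSet.diff hT) (measure_mono_null (fun x hx => hx.2) hT₀)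
  have hμKT : μ (K ∩ T) = 0 := by
    rwa [Measure.restrict_apply hT, inter_comm] at hμT
  refine ⟨C, hCS.trans sdiff_subset, measure_mono_null ?_ (measure_union_null hμKT hμC), h1C⟩
  rintro x ⟨hxK, hxC⟩
  by_cases hxT : x ∈ T
  exacts [Or.inl ⟨hxK, hxT⟩, Or.inr ⟨⟨hxK, hxT⟩, hxC⟩]

end Translates

theorem stmt_13_general {G : Type*} [Group G] [MetricSpace G] [IsTopologicalGroup G]
    [SeparableSpace G] [MeasurableSpace G] [BorelSpace G]
    (μ : Measure G) [IsProbabilityMeasure μ] [μ.OuterRegular]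
    (K : Set G) (hK : IsCompact K) :
    ((1 : G) ∉ interior (K * K⁻¹) →
      (⨆ (δ : ℝ) (_ : 0 < δ), ⨅ (t : G) (_ : dist (1 : G) t < δ),
        μ ((t * ·) '' K)) = 0 ∧
      ∃ t : ℕ → G, Tendsto t atTop (nhds 1) ∧
        Tendsto (fun n => μ ((t n * ·) '' K)) atTop (nhds 0)) ∧
    (BaireSpace G →
      (⨆ (δ : ℝ) (_ : 0 < δ), ⨅ (t : G) (_ : dist (1 : G) t < δ),
        μ ((t * ·) '' K)) = 0 →
      (∃ t : ℕ → G, Tendsto t atTop (nhds 1) ∧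
        Tendsto (fun n => μ ((t n * ·) '' K)) atTop (nhds 0)) ∧
      ∃ C ⊆ K, μ (K \ C) = 0 ∧ (1 : G) ∉ interior (C * C⁻¹)) := by
  rw [iSup_iInf_dist_lt_eq_liminf, ENNReal.liminf_eq_zero_iff_mapClusterPt]
  have hseq (h : MapClusterPt 0 (𝓝 1) fun t : G => μ (t • K)) :
      ∃ t : ℕ → G, Tendsto t atTop (𝓝 1) ∧ Tendsto (fun n => μ ((t n * ·) '' K)) atTop (𝓝 0) :=
    let ⟨t, hμt, ht⟩ := h.exists_seq_tendsto
    ⟨t, ht, hμt⟩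
  refine ⟨fun h1 => ?_, fun _ h => ⟨hseq h,
    exists_subset_measure_sdiff_eq_zero_one_notMem_interior_of_mapClusterPt μ hK h⟩⟩
  have h := mapClusterPt_measure_smul_of_one_notMem_interior μ hK h1
  exact ⟨h, hseq h⟩

/-- Mospan property: for a regular Borel probability measure `μ` and compact
`K` with `μ(K) > 0`: (a) if `1` is not interior to `KK⁻¹` then `μ₋(K) = 0`,
equivalently some null sequence `t_n → 1` has `μ(t_nK) → 0`; (b) conversely,
if `G` is a Baire space and `μ₋(K) = 0 < μ(K)`, then there is a null sequence
`t_n → 1` with `μ(t_nK) → 0`, and there is `C ⊆ K` with `μ(K \ C) = 0` such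
that `1` is not interior to `CC⁻¹`. -/
theorem stmt_13 {G : Type*} [Group G] [MetricSpace G] [IsTopologicalGroup G]
    [SeparableSpace G] [MeasurableSpace G] [BorelSpace G]
    (hd : ∀ x y z : G, dist (x * z) (y * z) = dist x y)
    (μ : Measure G) [IsProbabilityMeasure μ] [μ.InnerRegular] [μ.OuterRegular]
    (K : Set G) (hK : IsCompact K) (hμK : 0 < μ K) :
    ((1 : G) ∉ interior (K * K⁻¹) →
      (⨆ (δ : ℝ) (_ : 0 < δ), ⨅ (t : G) (_ : dist (1 : G) t < δ),
        μ ((t * ·) '' K)) = 0 ∧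
      ∃ t : ℕ → G, Tendsto t atTop (nhds 1) ∧
        Tendsto (fun n => μ ((t n * ·) '' K)) atTop (nhds 0)) ∧
    (BaireSpace G →
      (⨆ (δ : ℝ) (_ : 0 < δ), ⨅ (t : G) (_ : dist (1 : G) t < δ),
        μ ((t * ·) '' K)) = 0 →
      (∃ t : ℕ → G, Tendsto t atTop (nhds 1) ∧
        Tendsto (fun n => μ ((t n * ·) '' K)) atTop (nhds 0)) ∧
      ∃ C ⊆ K, μ (K \ C) = 0 ∧ (1 : G) ∉ interior (C * C⁻¹)) :=
  stmt_13_general μ K hK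
end

section
/- Baire–Kemperman property: suppose G is a Baire space under its topology T. If A ⊆ G has the Baire property and is non-meagre, then there exists δ > 0 such that for every t with ‖t‖ < δ the set tA ∩ A has the Baire property and is non-meagre; in particular B_δ ⊆ AA⁻¹. -/
/-!
Work modulo meagre sets. If `A` agrees with an open set `U` up to a meagre set, then so do `tA ∩ A`
and the open set `tU ∩ U`, left translation being a homeomorphism. If `U` contains the ball
`B(x, r)`, right invariance gives `d(tx, x) = ‖t‖`, so for `‖t‖ < r` the point `tx` lies in
`tU ∩ U`; a nonempty open set is non-meagre in a Baire space, hence so is `tA ∩ A`. In particular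
`tA ∩ A` contains some `ta`, and `t = (ta)a⁻¹ ∈ AA⁻¹`.
-/

open Set Topology Pointwise Filter
open scoped symmDiff

section Residual

variable {X : Type*} [TopologicalSpace X] {s t : Set X}

theorem isMeagre_iff_residualEq_empty : IsMeagre s ↔ s =ᵇ (∅ : Set X) :=
  eventuallyEq_empty.symm

theorem isMeagre_symmDiff_iff_residualEq : IsMeagre (s ∆ t) ↔ s =ᵇ t := by
  rw [isMeagre_iff_residualEq_empty]
  constructor <;> intro h
  · simpa [symmDiff_symmDiff_cancel_right, ← bot_eq_empty] using h.symmDiff (.refl _ t)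
  · simpa using h.symmDiff (.refl _ t)

theorem Filter.EventuallyEq.isMeagre_iff (h : s =ᵇ t) : IsMeagre s ↔ IsMeagre t := by
  simp only [isMeagre_iff_residualEq_empty]
  exact ⟨h.symm.trans, h.trans⟩

theorem Set.Nonempty.of_not_isMeagre (h : ¬ IsMeagre s) : s.Nonempty :=
  nonempty_iff_ne_empty.2 fun hs => h (hs ▸ IsMeagre.empty)

end Residual

theorem Filter.EventuallyEq.image_mul_left {G : Type*} [Group G] [TopologicalSpace G]
    [ContinuousMul G] {s t : Set G} (h : s =ᵇ t) (a : G) :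
    ((a * ·) '' s : Set G) =ᶠ[residual G] (a * ·) '' t := by
  rw [Set.image_mul_left, Set.image_mul_left]
  exact h.comp_tendsto
    (tendsto_residual_of_isOpenMap (continuous_const_mul _) (isOpenMap_mul_left _))

theorem mem_mul_inv_of_nonempty_image_mul_left_inter {G : Type*} [Group G] {A : Set G} {t : G}
    (h : ((t * ·) '' A ∩ A).Nonempty) : t ∈ A * A⁻¹ := by
  obtain ⟨_, ⟨a, ha, rfl⟩, hta⟩ := h
  simpa using mul_mem_mul hta (inv_mem_inv.mpr ha)

section RightInvariant

variable {G : Type*} [Group G] [PseudoMetricSpace G]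

theorem dist_mul_self_of_right_invariant (hd : ∀ x y z : G, dist (x * z) (y * z) = dist x y)
    (t x : G) : dist (t * x) x = dist 1 t := by
  rw [dist_comm 1 t, ← hd t 1 x, one_mul]

theorem nonempty_image_mul_left_inter_of_ball_subset
    (hd : ∀ x y z : G, dist (x * z) (y * z) = dist x y) {U : Set G} {x : G} {r : ℝ}
    (hU : Metric.ball x r ⊆ U) {t : G} (ht : dist 1 t < r) : ((t * ·) '' U ∩ U).Nonempty :=
  ⟨t * x, mem_image_of_mem _ (hU (Metric.mem_ball_self (dist_nonneg.trans_lt ht))),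
    hU (by rwa [Metric.mem_ball, dist_mul_self_of_right_invariant hd])⟩

end RightInvariant

/-- Baire–Kemperman property: in a Baire topological group with
right-invariant metric, if `A` is Baire non-meagre then there is `δ > 0` such
that `tA ∩ A` is Baire non-meagre for `‖t‖ < δ`; in particular
`B_δ ⊆ AA⁻¹`. -/
theorem stmt_14 {G : Type*} [Group G] [MetricSpace G] [IsTopologicalGroup G]
    [BaireSpace G]
    (hd : ∀ x y z : G, dist (x * z) (y * z) = dist x y)
    (A : Set G) (hA : ∃ U : Set G, IsOpen U ∧ IsMeagre (symmDiff A U))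
    (hnm : ¬ IsMeagre A) :
    ∃ δ > (0 : ℝ),
      (∀ t : G, dist (1 : G) t < δ →
        (∃ V : Set G, IsOpen V ∧ IsMeagre (symmDiff ((t * ·) '' A ∩ A) V)) ∧
        ¬ IsMeagre ((t * ·) '' A ∩ A)) ∧
      {t : G | dist (1 : G) t < δ} ⊆ A * A⁻¹ := by
  obtain ⟨U, hUo, hAU⟩ := hA
  rw [isMeagre_symmDiff_iff_residualEq] at hAU
  obtain ⟨x, hx⟩ := Set.Nonempty.of_not_isMeagre (hAU.isMeagre_iff.not.1 hnm)
  obtain ⟨r, hr, hball⟩ := Metric.isOpen_iff.mp hUo x hx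
  have key : ∀ t : G, dist (1 : G) t < r →
      (∃ V : Set G, IsOpen V ∧ IsMeagre (symmDiff ((t * ·) '' A ∩ A) V)) ∧
      ¬ IsMeagre ((t * ·) '' A ∩ A) := by
    intro t ht
    have hW : ((t * ·) '' A ∩ A : Set G) =ᶠ[residual G]
      ((t * ·) '' U ∩ U : Set G) := (hAU.image_mul_left t).inter hAU
    have hWo : IsOpen ((t * ·) '' U ∩ U) := (isOpenMap_mul_left t U hUo).inter hUo
    refine ⟨⟨_, hWo, isMeagre_symmDiff_iff_residualEq.2 hW⟩, ?_⟩
    rw [hW.isMeagre_iff]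
    exact not_isMeagre_of_isOpen hWo (nonempty_image_mul_left_inter_of_ball_subset hd hball ht)
  exact ⟨r, hr, key, fun t ht =>
    mem_mul_inv_of_nonempty_image_mul_left_inter (.of_not_isMeagre (key t ht).2)⟩
end

section
/- Converse Steinhaus–Weil theorem: let G be a Polish group whose topology is induced by a right-invariant metric d, and let μ be a Borel probability measure on G, inner regular by compact sets and outer regular by open sets. Then the following are equivalent: (a) μ has the Steinhaus–Weil property, i.e. for every μ-measurable A with μ(A) > 0, 1_G is an interior point of AA⁻¹; (b) for every compact K with μ(K) > 0 the map t ↦ μ(tK) is subcontinuous at 1_G, i.e. every sequence t_n → 1_G has a subsequence t_{m(n)} with inf_n μ(t_{m(n)}K) > 0; (c) for no compact K with μ(K) > 0 does there exist a sequence t_n → 1_G with μ(t_nK) → 0. -/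
open Set Topology TopologicalSpace MeasureTheory Filter Pointwise

/-!
(b) ⇒ (a): if `1` is not interior to `KK⁻¹` for a compact `K` of positive measure, pick
`tₙ → 1` outside `KK⁻¹`, so that `tₙK` is disjoint from `K`, and a subsequence with
`c := inf μ(tₙK) > 0`. By outer regularity `K` has an open neighbourhood `U` with
`μ U < μ K + c`, and compactness forces `tₙK ⊆ U` for large `n`, whence
`μ K + c ≤ μ (K ∪ tₙK) ≤ μ U`.

(a) ⇒ (c): if `μ(tₙK) → 0`, pass to a subsequence with `∑ μ(tₙK) < μ K`. Then
`B := K \ ⋃ tₙK` has positive measure, yet `tₙB` misses `B` for every `n`, so no `tₙ` lies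
in `BB⁻¹`, which is a neighbourhood of `1`.

(c) ⇒ (b) ⇒ (c) is the fact that `0` is a cluster point of a sequence in `[0, ∞]` iff no
subsequence is bounded away from `0`.
-/

namespace ENNReal

theorem exists_strictMono_tsum_lt {f : ℕ → ℝ≥0∞} (hf : Tendsto f atTop (𝓝 0)) {ε : ℝ≥0∞}
    (hε : ε ≠ 0) : ∃ m : ℕ → ℕ, StrictMono m ∧ ∑' n, f (m n) < ε := by
  obtain ⟨δ, hδ, hδε⟩ := exists_pos_sum_of_countable' hε ℕ
  obtain ⟨m, hm, hfm⟩ := extraction_forall_of_eventually fun n => hf.eventually_lt_const (hδ n)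
  exact ⟨m, hm, (ENNReal.tsum_le_tsum fun n => (hfm n).le).trans_lt hδε⟩

theorem exists_strictMono_iInf_pos {f : ℕ → ℝ≥0∞}
    (hf : ∀ m : ℕ → ℕ, StrictMono m → ¬ Tendsto (f ∘ m) atTop (𝓝 0)) :
    ∃ m : ℕ → ℕ, StrictMono m ∧ 0 < ⨅ n, f (m n) := by
  by_contra! h
  have hcluster : MapClusterPt 0 atTop f := by
    refine nhds_zero_basis.mapClusterPt_iff_frequently.2 fun ε hε => frequently_atTop.2 fun N => ?_
    obtain ⟨n, hn⟩ := iInf_lt_iff.1 ((h (· + N) (strictMono_id.add_const N)).trans_lt hε)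
    exact ⟨n + N, le_add_self, hn⟩
  obtain ⟨m, hm, hm0⟩ := hcluster.tendsto_subseq
  exact hf m hm hm0

end ENNReal

theorem Set.disjoint_image_mul_left_iff {G : Type*} [Group G] {t : G} {K L : Set G} :
    Disjoint ((t * ·) '' K) L ↔ t ∉ L * K⁻¹ := by
  refine ⟨fun hKL ⟨a, ha, b, hb, hab⟩ => disjoint_left.1 hKL ⟨b⁻¹, hb, ?_⟩ ha,
    fun ht => disjoint_left.2 ?_⟩
  · simp [← hab]
  · rintro _ ⟨k, hk, rfl⟩ htk
    exact ht ⟨t * k, htk, k⁻¹, inv_mem_inv.2 hk, mul_inv_cancel_right t k⟩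

section SteinhausWeil

variable {G : Type*} [Group G] [TopologicalSpace G] [MeasurableSpace G]

def SteinhausWeil (μ : Measure G) : Prop :=
  ∀ A : Set G, NullMeasurableSet A μ → 0 < μ A → (1 : G) ∈ interior (A * A⁻¹)

def SubcontinuousTranslates (μ : Measure G) : Prop :=
  ∀ K : Set G, IsCompact K → 0 < μ K →
    ∀ t : ℕ → G, Tendsto t atTop (𝓝 1) →
      ∃ m : ℕ → ℕ, StrictMono m ∧ 0 < ⨅ n, μ ((t (m n) * ·) '' K)

def NoVanishingTranslates (μ : Measure G) : Prop :=
  ∀ K : Set G, IsCompact K → 0 < μ K →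
    ¬ ∃ t : ℕ → G, Tendsto t atTop (𝓝 1) ∧
      Tendsto (fun n => μ ((t n * ·) '' K)) atTop (𝓝 0)

variable {μ : Measure G}

theorem SubcontinuousTranslates.noVanishingTranslates (h : SubcontinuousTranslates μ) :
    NoVanishingTranslates μ := by
  rintro K hK hK0 ⟨t, ht, ht0⟩
  obtain ⟨m, hm, hpos⟩ := h K hK hK0 t ht
  obtain ⟨n, hn⟩ := ((ht0.comp hm.tendsto_atTop).eventually_lt_const hpos).exists
  exact (iInf_le _ n).not_gt hn

theorem NoVanishingTranslates.subcontinuousTranslates (h : NoVanishingTranslates μ) :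
    SubcontinuousTranslates μ := fun K hK hK0 t ht =>
  ENNReal.exists_strictMono_iInf_pos (f := fun n => μ ((t n * ·) '' K)) fun m hm hm0 =>
    h K hK hK0 ⟨t ∘ m, ht.comp hm.tendsto_atTop, hm0⟩

theorem SteinhausWeil.of_isCompact [μ.InnerRegular]
    (h : ∀ K : Set G, IsCompact K → 0 < μ K → (1 : G) ∈ interior (K * K⁻¹)) :
    SteinhausWeil μ := by
  intro A hA hA0
  obtain ⟨S, hSA, hS, hSA_ae⟩ := hA.exists_measurable_subset_ae_eq
  obtain ⟨K, hKS, hK, hK0⟩ := hS.exists_lt_isCompact (by rwa [measure_congr hSA_ae])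
  have hKA : K ⊆ A := hKS.trans hSA
  exact interior_mono (mul_subset_mul hKA (inv_subset_inv.2 hKA)) (h K hK hK0)

variable [IsTopologicalGroup G] [T2Space G] [OpensMeasurableSpace G]

theorem one_mem_interior_mul_inv_of_subcontinuous [FirstCountableTopology G]
    [IsFiniteMeasure μ] [μ.OuterRegular] {K : Set G} (hK : IsCompact K)
    (hsub : ∀ t : ℕ → G, Tendsto t atTop (𝓝 1) →
      ∃ m : ℕ → ℕ, StrictMono m ∧ 0 < ⨅ n, μ ((t (m n) * ·) '' K)) :
    (1 : G) ∈ interior (K * K⁻¹) := by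
  by_contra h1
  obtain ⟨t, htK, ht⟩ : ∃ t : ℕ → G, (∀ n, t n ∈ (K * K⁻¹)ᶜ) ∧ Tendsto t atTop (𝓝 1) :=
    mem_closure_iff_seq_limit.1 (by rwa [closure_compl, mem_compl_iff])
  obtain ⟨m, hm, hc⟩ := hsub t ht
  obtain ⟨U, hKU, hU, hμU⟩ := Set.exists_isOpen_lt_add K (measure_ne_top μ K) hc.ne'
  obtain ⟨V, hV, hVK⟩ := compact_open_separated_mul_left hK hU hKU
  obtain ⟨n, hn⟩ := ((ht.comp hm.tendsto_atTop).eventually hV).exists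
  have htKU : (t (m n) * ·) '' K ⊆ U := by
    rintro _ ⟨k, hk, rfl⟩
    exact hVK (mul_mem_mul hn hk)
  have hdisj : Disjoint K ((t (m n) * ·) '' K) :=
    (disjoint_image_mul_left_iff.2 (htK (m n))).symm
  refine hμU.not_ge ?_
  calc μ K + ⨅ n, μ ((t (m n) * ·) '' K)
      ≤ μ K + μ ((t (m n) * ·) '' K) := by gcongr; exact iInf_le _ n
    _ = μ (K ∪ (t (m n) * ·) '' K) :=
      (measure_union hdisj (hK.image (continuous_const_mul _)).measurableSet).symm
    _ ≤ μ U := measure_mono (union_subset hKU htKU)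

theorem SubcontinuousTranslates.steinhausWeil [FirstCountableTopology G] [IsFiniteMeasure μ]
    [μ.InnerRegular] [μ.OuterRegular] (h : SubcontinuousTranslates μ) : SteinhausWeil μ :=
  .of_isCompact fun K hK hK0 => one_mem_interior_mul_inv_of_subcontinuous hK (h K hK hK0)

theorem SteinhausWeil.noVanishingTranslates (h : SteinhausWeil μ) : NoVanishingTranslates μ := by
  rintro K hK hK0 ⟨t, ht, ht0⟩
  obtain ⟨m, hm, hsum⟩ := ENNReal.exists_strictMono_tsum_lt ht0 hK0.ne'
  set B := K \ ⋃ n, (t (m n) * ·) '' K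
  have hB : MeasurableSet B :=
    hK.measurableSet.diff (.iUnion fun n => (hK.image (continuous_const_mul _)).measurableSet)
  have hB0 : 0 < μ B :=
    calc 0 < μ K - ∑' n, μ ((t (m n) * ·) '' K) := tsub_pos_of_lt hsum
      _ ≤ μ K - μ (⋃ n, (t (m n) * ·) '' K) := by gcongr; exact measure_iUnion_le _
      _ ≤ μ B := le_measure_sdiff
  obtain ⟨n, hn⟩ := ((ht.comp hm.tendsto_atTop).eventually
    (isOpen_interior.mem_nhds (h B hB.nullMeasurableSet hB0))).exists
  refine disjoint_image_mul_left_iff.1 ?_ (interior_subset hn)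
  exact disjoint_sdiff_right.mono_left
    ((image_mono sdiff_subset).trans (subset_iUnion_of_subset n subset_rfl))

end SteinhausWeil

theorem stmt_15_general {G : Type*} [Group G] [MetricSpace G] [IsTopologicalGroup G]
    [MeasurableSpace G] [BorelSpace G]
    (μ : Measure G) [IsProbabilityMeasure μ] [μ.InnerRegular] [μ.OuterRegular] :
    ((∀ A : Set G, NullMeasurableSet A μ → 0 < μ A →
        (1 : G) ∈ interior (A * A⁻¹)) ↔
      (∀ K : Set G, IsCompact K → 0 < μ K →
        ∀ t : ℕ → G, Tendsto t atTop (nhds 1) →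
          ∃ m : ℕ → ℕ, StrictMono m ∧ 0 < ⨅ n, μ ((t (m n) * ·) '' K))) ∧
    ((∀ K : Set G, IsCompact K → 0 < μ K →
        ∀ t : ℕ → G, Tendsto t atTop (nhds 1) →
          ∃ m : ℕ → ℕ, StrictMono m ∧ 0 < ⨅ n, μ ((t (m n) * ·) '' K)) ↔
      (∀ K : Set G, IsCompact K → 0 < μ K →
        ¬ ∃ t : ℕ → G, Tendsto t atTop (nhds 1) ∧
          Tendsto (fun n => μ ((t n * ·) '' K)) atTop (nhds 0))) :=
  ⟨⟨fun ha => (SteinhausWeil.noVanishingTranslates ha).subcontinuousTranslates,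
      SubcontinuousTranslates.steinhausWeil⟩,
    ⟨SubcontinuousTranslates.noVanishingTranslates,
      NoVanishingTranslates.subcontinuousTranslates⟩⟩

/-- Converse Steinhaus–Weil theorem: for a regular Borel probability measure
`μ` on a Polish group `G` with right-invariant metric, the following are
equivalent: (a) `μ` has the Steinhaus–Weil property; (b) for every compact
`K` of positive measure the map `t ↦ μ(tK)` is subcontinuous at `1`; (c) for
no compact `K` of positive measure is there a null sequence `t_n → 1` with
`μ(t_nK) → 0`. -/
theorem stmt_15 {G : Type*} [Group G] [MetricSpace G] [IsTopologicalGroup G]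
    [SeparableSpace G] [CompleteSpace G] [MeasurableSpace G] [BorelSpace G]
    (hd : ∀ x y z : G, dist (x * z) (y * z) = dist x y)
    (μ : Measure G) [IsProbabilityMeasure μ] [μ.InnerRegular] [μ.OuterRegular] :
    ((∀ A : Set G, NullMeasurableSet A μ → 0 < μ A →
        (1 : G) ∈ interior (A * A⁻¹)) ↔
      (∀ K : Set G, IsCompact K → 0 < μ K →
        ∀ t : ℕ → G, Tendsto t atTop (nhds 1) →
          ∃ m : ℕ → ℕ, StrictMono m ∧ 0 < ⨅ n, μ ((t (m n) * ·) '' K))) ∧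
    ((∀ K : Set G, IsCompact K → 0 < μ K →
        ∀ t : ℕ → G, Tendsto t atTop (nhds 1) →
          ∃ m : ℕ → ℕ, StrictMono m ∧ 0 < ⨅ n, μ ((t (m n) * ·) '' K)) ↔
      (∀ K : Set G, IsCompact K → 0 < μ K →
        ¬ ∃ t : ℕ → G, Tendsto t atTop (nhds 1) ∧
          Tendsto (fun n => μ ((t n * ·) '' K)) atTop (nhds 0))) :=
  stmt_15_general μ
end

section
/- Let H be a left-invariant σ-ideal of subsets of G (gM ∈ H for all g ∈ G and M ∈ H), and let U_+(H) be the family of universally measurable subsets of G not belonging to H. If U_+(H) has the Steinhaus–Weil property (for every E ∈ U_+(H), 1_G is an interior point of EE⁻¹), then U_+(H) has the Kemperman property: for every E ∈ U_+(H) there exists δ > 0 such that E ∩ tE ∈ U_+(H) (in particular E ∩ tE ∉ H) for all t with ‖t‖ < δ. -/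
open Set Topology TopologicalSpace MeasureTheory Filter Pointwise

/-!
Suppose `E ∈ U_+(𝓗)` but `E ∩ tₙE ∈ 𝓗` along a sequence `tₙ → 1`. Removing the union `S` of these
bad intersections from `E` costs only a set of `𝓗`, so `F := E \ S` still lies in `U_+(𝓗)`, and the
Steinhaus–Weil property puts `tₙ ∈ FF⁻¹` for large `n`. Then `F ∩ tₙF ≠ ∅`, whereas
`F ∩ tₙF ⊆ (E ∩ tₙE) \ S = ∅`.
-/

section UniversallyMeasurable

variable {G : Type*} [MeasurableSpace G]

def IsUniversallyMeasurable (E : Set G) : Prop :=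
  ∀ μ : Measure G, IsProbabilityMeasure μ → NullMeasurableSet E μ

namespace IsUniversallyMeasurable

variable {E F : Set G}

theorem inter (hE : IsUniversallyMeasurable E) (hF : IsUniversallyMeasurable F) :
    IsUniversallyMeasurable (E ∩ F) :=
  fun μ hμ => (hE μ hμ).inter (hF μ hμ)

theorem diff (hE : IsUniversallyMeasurable E) (hF : IsUniversallyMeasurable F) :
    IsUniversallyMeasurable (E \ F) :=
  fun μ hμ => (hE μ hμ).diff (hF μ hμ)

theorem iUnion {f : ℕ → Set G} (hf : ∀ n, IsUniversallyMeasurable (f n)) :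
    IsUniversallyMeasurable (⋃ n, f n) :=
  fun μ hμ => NullMeasurableSet.iUnion fun n => hf n μ hμ

theorem image_mul_left [Group G] [MeasurableMul G] (hE : IsUniversallyMeasurable E) (t : G) :
    IsUniversallyMeasurable ((t * ·) '' E) := by
  intro μ _
  have hf : Measurable (t⁻¹ * ·) := measurable_const_mul t⁻¹
  have : IsProbabilityMeasure (μ.map (t⁻¹ * ·)) :=
    Measure.isProbabilityMeasure_map hf.aemeasurable
  rw [Set.image_mul_left]
  exact (hE _ inferInstance).preimage (hf.quasiMeasurePreserving μ)

end IsUniversallyMeasurable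

end UniversallyMeasurable

section SigmaIdeal

variable {G : Type*} {𝓗 : Set (Set G)}

theorem union_mem_of_iUnion_mem (hunion : ∀ f : ℕ → Set G, (∀ n, f n ∈ 𝓗) → (⋃ n, f n) ∈ 𝓗)
    {A B : Set G} (hA : A ∈ 𝓗) (hB : B ∈ 𝓗) : A ∪ B ∈ 𝓗 := by
  have h := hunion (fun n => if n = 0 then A else B) fun n => by split_ifs <;> assumption
  convert h using 1
  ext x
  simp only [mem_union, mem_iUnion]
  constructor
  · rintro (hx | hx)
    exacts [⟨0, by simpa using hx⟩, ⟨1, by simpa using hx⟩]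
  · rintro ⟨n, hx⟩
    split_ifs at hx <;> simp [hx]

theorem diff_notMem_of_notMem (hmono : ∀ s t : Set G, s ⊆ t → t ∈ 𝓗 → s ∈ 𝓗)
    (hunion : ∀ f : ℕ → Set G, (∀ n, f n ∈ 𝓗) → (⋃ n, f n) ∈ 𝓗)
    {E S : Set G} (hE : E ∉ 𝓗) (hS : S ∈ 𝓗) : E \ S ∉ 𝓗 :=
  fun hES => hE <| hmono _ _ (fun x hx => by by_cases hxS : x ∈ S <;> simp [hx, hxS])
    (union_mem_of_iUnion_mem hunion hES hS)

end SigmaIdeal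

theorem inter_image_mul_left_nonempty_of_mem_mul_inv {G : Type*} [Group G] {F : Set G} {t : G}
    (ht : t ∈ F * F⁻¹) : (F ∩ (t * ·) '' F).Nonempty := by
  obtain ⟨a, ha, b, hb, rfl⟩ := ht
  exact ⟨a, ha, b⁻¹, hb, by simp [mul_assoc]⟩

theorem eventually_inter_image_mul_left_notMem {G : Type*} [Group G] [TopologicalSpace G]
    [FirstCountableTopology G] [MeasurableSpace G] [MeasurableMul G] {𝓗 : Set (Set G)}
    (hmono : ∀ s t : Set G, s ⊆ t → t ∈ 𝓗 → s ∈ 𝓗)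
    (hunion : ∀ f : ℕ → Set G, (∀ n, f n ∈ 𝓗) → (⋃ n, f n) ∈ 𝓗)
    (hSW : ∀ E : Set G, IsUniversallyMeasurable E → E ∉ 𝓗 → (1 : G) ∈ interior (E * E⁻¹))
    {E : Set G} (hE : IsUniversallyMeasurable E) (hEH : E ∉ 𝓗) :
    ∀ᶠ t in 𝓝 1, E ∩ (t * ·) '' E ∉ 𝓗 := by
  by_contra hfreq
  simp only [not_eventually, not_not] at hfreq
  obtain ⟨u, hu, hbad⟩ := exists_seq_forall_of_frequently hfreq
  set S := ⋃ n, E ∩ (u n * ·) '' E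
  have hFH : E \ S ∉ 𝓗 := diff_notMem_of_notMem hmono hunion hEH (hunion _ hbad)
  have hF : IsUniversallyMeasurable (E \ S) :=
    hE.diff (.iUnion fun n => hE.inter (hE.image_mul_left (u n)))
  obtain ⟨n, hn⟩ := (hu.eventually (mem_interior_iff_mem_nhds.1 (hSW _ hF hFH))).exists
  obtain ⟨x, hxF, hxuF⟩ := inter_image_mul_left_nonempty_of_mem_mul_inv hn
  exact hxF.2 (mem_iUnion.2 ⟨n, hxF.1, image_mono sdiff_subset hxuF⟩)

theorem stmt_16_general {G : Type*} [Group G] [MetricSpace G] [IsTopologicalGroup G]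
    [MeasurableSpace G] [BorelSpace G]
    (𝓗 : Set (Set G))
    (hmono : ∀ s t : Set G, s ⊆ t → t ∈ 𝓗 → s ∈ 𝓗)
    (hunion : ∀ f : ℕ → Set G, (∀ n, f n ∈ 𝓗) → (⋃ n, f n) ∈ 𝓗)
    (hSW : ∀ E : Set G,
      (∀ μ : Measure G, IsProbabilityMeasure μ → NullMeasurableSet E μ) →
      E ∉ 𝓗 → (1 : G) ∈ interior (E * E⁻¹)) :
    ∀ E : Set G,
      (∀ μ : Measure G, IsProbabilityMeasure μ → NullMeasurableSet E μ) →
      E ∉ 𝓗 →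
      ∃ δ > (0 : ℝ), ∀ t : G, dist (1 : G) t < δ →
        (∀ μ : Measure G, IsProbabilityMeasure μ →
          NullMeasurableSet (E ∩ (t * ·) '' E) μ) ∧
        (E ∩ (t * ·) '' E) ∉ 𝓗 := by
  intro E (hE : IsUniversallyMeasurable E) hEH
  obtain ⟨δ, hδ, hsmall⟩ :=
    Metric.eventually_nhds_iff.1 (eventually_inter_image_mul_left_notMem hmono hunion hSW hE hEH)
  exact ⟨δ, hδ, fun t ht =>
    ⟨hE.inter (hE.image_mul_left t), hsmall (by rwa [dist_comm])⟩⟩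

/-- If `𝓗` is a left-invariant `σ`-ideal on `G` and the family `U_+(𝓗)` of
universally measurable sets not in `𝓗` has the Steinhaus–Weil property, then
`U_+(𝓗)` has the Kemperman property: for `E ∈ U_+(𝓗)` there is `δ > 0` with
`E ∩ tE ∈ U_+(𝓗)` for all `‖t‖ < δ`. -/
theorem stmt_16 {G : Type*} [Group G] [MetricSpace G] [IsTopologicalGroup G]
    [MeasurableSpace G] [BorelSpace G]
    (hd : ∀ x y z : G, dist (x * z) (y * z) = dist x y)
    (𝓗 : Set (Set G)) (hempty : ∅ ∈ 𝓗)
    (hmono : ∀ s t : Set G, s ⊆ t → t ∈ 𝓗 → s ∈ 𝓗)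
    (hunion : ∀ f : ℕ → Set G, (∀ n, f n ∈ 𝓗) → (⋃ n, f n) ∈ 𝓗)
    (hinv : ∀ (g : G) (M : Set G), M ∈ 𝓗 → (g * ·) '' M ∈ 𝓗)
    (hSW : ∀ E : Set G,
      (∀ μ : Measure G, IsProbabilityMeasure μ → NullMeasurableSet E μ) →
      E ∉ 𝓗 → (1 : G) ∈ interior (E * E⁻¹)) :
    ∀ E : Set G,
      (∀ μ : Measure G, IsProbabilityMeasure μ → NullMeasurableSet E μ) →
      E ∉ 𝓗 →
      ∃ δ > (0 : ℝ), ∀ t : G, dist (1 : G) t < δ →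
        (∀ μ : Measure G, IsProbabilityMeasure μ →
          NullMeasurableSet (E ∩ (t * ·) '' E) μ) ∧
        (E ∩ (t * ·) '' E) ∉ 𝓗 :=
  stmt_16_general 𝓗 hmono hunion hSW
end

section
/- Displacements Theorem: let D be a topology on G refining T such that (i) D is shift-invariant: xV ∈ D for all x ∈ G, V ∈ D; (ii) the family B_0(D) of D-meagre sets is left-invariant: xM ∈ B_0(D) for all x ∈ G, M ∈ B_0(D); (iii) localization: H ∖ int_D(H) ∈ B_0(D) for every D-Baire set H; (iv) Kemperman property: for every 1_G ∈ U ∈ D there is δ > 0 with tU ∩ U ∈ B_+(D) for all ‖t‖ < δ; (v) modulo B_0(D) every D-Baire set is analytic in the topology T, and (G, D) is a Baire space. Then for every A ∈ B_+(D) there is a D-meagre set A' ⊆ A such that for every a ∈ A ∖ A' there exists ε = ε_A(a) > 0 with a x a⁻¹ A ∩ A ∈ B_+(D) for all x with ‖x‖ < ε; in particular {a x a⁻¹ : ‖x‖ < ε_A(a)} ⊆ AA⁻¹ for all a ∈ A off a B_0(D)-set. -/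
open Set Topology TopologicalSpace Pointwise

/-! By localization `A` differs from the open set `I = int_D A` by a meagre set, the exceptional
set `A'`. For `a ∈ I` the Kemperman property at `1 ∈ a⁻¹ I` makes `x a⁻¹ I ∩ a⁻¹ I` non-meagre
for small `‖x‖`; translating by `a` turns this into `(a x a⁻¹) I ∩ I`, an open non-meagre subset
of `(a x a⁻¹) A ∩ A` differing from it by a meagre set. -/

theorem smul_conj_smul_inter_eq {G : Type*} [Group G] (a x : G) (S : Set G) :
    a • (x • (a⁻¹ • S) ∩ a⁻¹ • S) = (a * x * a⁻¹) • S ∩ S := by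
  rw [smul_set_inter, smul_smul, smul_smul, smul_inv_smul]

theorem mem_mul_inv_of_smul_inter_nonempty {G : Type*} [Group G] {A : Set G} {g : G}
    (h : (g • A ∩ A).Nonempty) : g ∈ A * A⁻¹ := by
  obtain ⟨a, b, ⟨ha, hb⟩, rfl⟩ := smul_inter_nonempty_iff.1 h
  exact mul_mem_mul ha (inv_mem_inv.2 hb)

section LeftInvariantMeagre

variable {G : Type*} [Group G] [TopologicalSpace G]

theorem not_isMeagre_smul (hinv : ∀ (x : G) (M : Set G), IsMeagre M → IsMeagre (x • M))
    {M : Set G} (hM : ¬IsMeagre M) (x : G) : ¬IsMeagre (x • M) :=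
  fun h ↦ hM (by simpa using hinv x⁻¹ _ h)

theorem isMeagre_symmDiff_smul_inter
    (hinv : ∀ (x : G) (M : Set G), IsMeagre M → IsMeagre (x • M))
    {A I : Set G} (hIA : I ⊆ A) (hAI : IsMeagre (A \ I)) (g : G) :
    IsMeagre (symmDiff (g • A ∩ A) (g • I ∩ I)) := by
  refine ((hinv g _ hAI).union hAI).mono ?_
  rw [symmDiff_of_ge (inter_subset_inter (smul_set_mono hIA) hIA), smul_set_sdiff]
  intro s
  simp only [mem_sdiff, mem_inter_iff, mem_union]
  tauto

end LeftInvariantMeagre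

theorem stmt_17_general {G : Type*} [Group G] [MetricSpace G]
    (D : TopologicalSpace G)
    (hshift : ∀ (x : G) (V : Set G), IsOpen[D] V → IsOpen[D] ((x * ·) '' V))
    (hinv : ∀ (x : G) (M : Set G), @IsMeagre G D M → @IsMeagre G D ((x * ·) '' M))
    (hloc : ∀ H : Set G, (∃ U : Set G, IsOpen[D] U ∧ @IsMeagre G D (symmDiff H U)) →
      @IsMeagre G D (H \ @interior G D H))
    (hkemp : ∀ U : Set G, IsOpen[D] U → (1 : G) ∈ U →
      ∃ δ > (0 : ℝ), ∀ t : G, dist (1 : G) t < δ →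
        (∃ V : Set G, IsOpen[D] V ∧ @IsMeagre G D (symmDiff ((t * ·) '' U ∩ U) V)) ∧
        ¬ @IsMeagre G D ((t * ·) '' U ∩ U)) :
    ∀ A : Set G, (∃ U : Set G, IsOpen[D] U ∧ @IsMeagre G D (symmDiff A U)) →
      ¬ @IsMeagre G D A →
      ∃ A' : Set G, A' ⊆ A ∧ @IsMeagre G D A' ∧
        ∀ a ∈ A \ A', ∃ ε > (0 : ℝ),
          (∀ x : G, dist (1 : G) x < ε →
            (∃ V : Set G, IsOpen[D] V ∧
              @IsMeagre G D (symmDiff (((a * x * a⁻¹) * ·) '' A ∩ A) V)) ∧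
            ¬ @IsMeagre G D (((a * x * a⁻¹) * ·) '' A ∩ A)) ∧
          (∀ x : G, dist (1 : G) x < ε → a * x * a⁻¹ ∈ A * A⁻¹) := by
  let := D -- `interior`, `IsMeagre`, `IsOpen` below refer to `D`, not the metric topology
  intro A hABaire _
  have hAI : IsMeagre (A \ interior A) := hloc A hABaire
  refine ⟨A \ interior A, sdiff_subset, hAI, fun a ⟨haA, ha⟩ ↦ ?_⟩
  have haI : a ∈ interior A := by_contra fun h ↦ ha ⟨haA, h⟩
  obtain ⟨δ, hδ, hK⟩ := hkemp (a⁻¹ • interior A) (hshift a⁻¹ _ isOpen_interior)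
    ⟨a, haI, inv_mul_cancel a⟩
  have hsub (g : G) : g • interior A ∩ interior A ⊆ g • A ∩ A :=
    inter_subset_inter (smul_set_mono interior_subset) interior_subset
  have hpos (x : G) (hx : dist 1 x < δ) :
      ¬IsMeagre ((a * x * a⁻¹) • interior A ∩ interior A) := by
    rw [← smul_conj_smul_inter_eq]
    exact not_isMeagre_smul hinv (hK x hx).2 a
  refine ⟨δ, hδ, fun x hx ↦ ⟨?_, fun h ↦ hpos x hx (h.mono (hsub _))⟩, fun x hx ↦ ?_⟩
  · exact ⟨_, (hshift _ _ isOpen_interior).inter isOpen_interior,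
      isMeagre_symmDiff_smul_inter hinv interior_subset hAI _⟩
  · exact mem_mul_inv_of_smul_inter_nonempty ((nonempty_of_not_isMeagre (hpos x hx)).mono (hsub _))

/-- Displacements Theorem: let `D` be a shift-invariant topology refining `T`
with left-invariant meagre `σ`-ideal, localization, the Kemperman property,
such that modulo `B₀(D)` every `D`-Baire set is `T`-analytic and `(G, D)` is
a Baire space. Then for `A ∈ B₊(D)` and quasi all `a ∈ A` there is `ε > 0`
with `a x a⁻¹ A ∩ A ∈ B₊(D)` for `‖x‖ < ε`; in particular
`{a x a⁻¹ : ‖x‖ < ε} ⊆ AA⁻¹` off a `B₀(D)`-set of `a ∈ A`. -/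
theorem stmt_17 {G : Type*} [Group G] [MetricSpace G] [IsTopologicalGroup G]
    [SeparableSpace G]
    (hd : ∀ x y z : G, dist (x * z) (y * z) = dist x y)
    (D : TopologicalSpace G)
    (hfine : ∀ S : Set G, IsOpen S → IsOpen[D] S)
    (hshift : ∀ (x : G) (V : Set G), IsOpen[D] V → IsOpen[D] ((x * ·) '' V))
    (hinv : ∀ (x : G) (M : Set G), @IsMeagre G D M → @IsMeagre G D ((x * ·) '' M))
    (hloc : ∀ H : Set G, (∃ U : Set G, IsOpen[D] U ∧ @IsMeagre G D (symmDiff H U)) →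
      @IsMeagre G D (H \ @interior G D H))
    (hkemp : ∀ U : Set G, IsOpen[D] U → (1 : G) ∈ U →
      ∃ δ > (0 : ℝ), ∀ t : G, dist (1 : G) t < δ →
        (∃ V : Set G, IsOpen[D] V ∧ @IsMeagre G D (symmDiff ((t * ·) '' U ∩ U) V)) ∧
        ¬ @IsMeagre G D ((t * ·) '' U ∩ U))
    (hanal : ∀ H : Set G, (∃ U : Set G, IsOpen[D] U ∧ @IsMeagre G D (symmDiff H U)) →
      ∃ A' : Set G, MeasureTheory.AnalyticSet A' ∧ @IsMeagre G D (symmDiff H A'))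
    (hBaire : @BaireSpace G D) :
    ∀ A : Set G, (∃ U : Set G, IsOpen[D] U ∧ @IsMeagre G D (symmDiff A U)) →
      ¬ @IsMeagre G D A →
      ∃ A' : Set G, A' ⊆ A ∧ @IsMeagre G D A' ∧
        ∀ a ∈ A \ A', ∃ ε > (0 : ℝ),
          (∀ x : G, dist (1 : G) x < ε →
            (∃ V : Set G, IsOpen[D] V ∧
              @IsMeagre G D (symmDiff (((a * x * a⁻¹) * ·) '' A ∩ A) V)) ∧
            ¬ @IsMeagre G D (((a * x * a⁻¹) * ·) '' A ∩ A)) ∧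
          (∀ x : G, dist (1 : G) x < ε → a * x * a⁻¹ ∈ A * A⁻¹) :=
  stmt_17_general D hshift hinv hloc hkemp
end
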